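/- arXiv:1411.3875 — 3 statements merged into one kernel-verified Lean document; each statement's English description precedes it below -/
import Mathlib

section
/- Let $0<c_1<1$, $0<c_2<1$, $r=\sqrt{c_1+c_2-c_1c_2}$, $b_+=((1+r)/(1-c_2))^2$, and $\bar h=(c_2+r)/(1-c_2)$. For $h>\bar h$, the quantity $x(h)=(h+c_1)(h+1)/(h-c_2(h+1))$ satisfies $x(h)>b_+$. -/
theorem stmt_1 (c1 c2 h : ℝ) (hc1 : 0 < c1) (hc1' : c1 < 1)
    (hc2 : 0 < c2) (hc2' : c2 < 1)
    (r : ℝ) (hr : r = Real.sqrt (c1 + c2 - c1 * c2))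
    (hh : h > (c2 + r) / (1 - c2)) :
    (h + c1) * (h + 1) / (h - c2 * (h + 1)) > ((1 + r) / (1 - c2)) ^ 2 := by
  have hpos : 0 < c1 + c2 - c1 * c2 := by nlinarith
  have hr0 : 0 ≤ r := hr ▸ Real.sqrt_nonneg _
  have hr2 : r ^ 2 = c1 + c2 - c1 * c2 := by
    rw [hr, sq, Real.mul_self_sqrt hpos.le]
  have hc2'' : 0 < 1 - c2 := by linarith
  have hD : h - c2 * (h + 1) > r := by
    have h1 : h * (1 - c2) > c2 + r := by
      have := (div_lt_iff₀ hc2'').mp hh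
      linarith
    nlinarith
  have hrpos : 0 < r := by nlinarith [sq_nonneg r]
  have hDpos : 0 < h - c2 * (h + 1) := by linarith
  rw [gt_iff_lt, lt_div_iff₀ hDpos, div_pow, div_mul_eq_mul_div,
    div_lt_iff₀ (by positivity)]
  nlinarith [sq_nonneg ((1 - c2) * h - c2 - r), hD, hDpos]
end

section
/- Let $u>v>0$. With $\varphi$ and $z_+$ as in the $_1F_1$ phase function, for $\zeta>0$ one has $\frac{\mathrm{d}^2\varphi}{\mathrm{d}\zeta^2}=\frac{(u+z_+)^2(u-v)}{(v+z_+)^2(uv+2uz_++z_+^2)}>0$; hence $\varphi$ is strictly convex on $(0,\infty)$. -/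
/-!
`z₊(ζ)` is the positive root of `z² + (v - ζ) z - u ζ = 0`, so implicit differentiation gives
`z₊' = (u + z₊)² / (u v + 2 u z₊ + z₊²)`. Since `φ'(z) = -(u v + 2 u z + z²) / ((z + v)(z + u))`,
the chain rule collapses the first derivative of `ζ ↦ φ(z₊(ζ))` to `-(u + z₊) / (v + z₊)`, whose
derivative is `(u - v) z₊' / (v + z₊)²`, positive for `u > v > 0`.
-/

open Real

namespace KummerPhase

noncomputable def zPlus (u v ζ : ℝ) : ℝ := (ζ - v + √((ζ - v) ^ 2 + 4 * u * ζ)) / 2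

noncomputable def phase (u v z : ℝ) : ℝ :=
  (u - v) * log (u - v) + v * log (z + v) - u * log (z + u) - z

variable {u v ζ : ℝ}

lemma sqrt_discr_eq (u v ζ : ℝ) : √((ζ - v) ^ 2 + 4 * u * ζ) = 2 * zPlus u v ζ - (ζ - v) := by
  unfold zPlus; ring

lemma zPlus_pos (hu : 0 < u) (hζ : 0 < ζ) : 0 < zPlus u v ζ := by
  have habs : |ζ - v| < √((ζ - v) ^ 2 + 4 * u * ζ) := by
    rw [← sqrt_sq_eq_abs]
    exact sqrt_lt_sqrt (sq_nonneg _) (by nlinarith [mul_pos hu hζ])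
  unfold zPlus
  linarith [neg_abs_le (ζ - v)]

lemma zPlus_sq_add (hu : 0 ≤ u) (hζ : 0 ≤ ζ) :
    zPlus u v ζ ^ 2 + (v - ζ) * zPlus u v ζ = u * ζ := by
  have h := sq_sqrt (show 0 ≤ (ζ - v) ^ 2 + 4 * u * ζ by positivity)
  rw [sqrt_discr_eq] at h
  linear_combination h / 4

lemma sqrt_discr_mul_add (hu : 0 ≤ u) (hζ : 0 ≤ ζ) :
    √((ζ - v) ^ 2 + 4 * u * ζ) * (zPlus u v ζ + u)
      = u * v + 2 * u * zPlus u v ζ + zPlus u v ζ ^ 2 := by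
  rw [sqrt_discr_eq]
  linear_combination zPlus_sq_add (v := v) hu hζ

lemma quadratic_zPlus_pos (hu : 0 < u) (hζ : 0 < ζ) :
    0 < u * v + 2 * u * zPlus u v ζ + zPlus u v ζ ^ 2 := by
  rw [← sqrt_discr_mul_add hu.le hζ.le]
  have := zPlus_pos (v := v) hu hζ
  exact mul_pos (sqrt_pos.2 (by positivity)) (by linarith)

lemma hasDerivAt_zPlus (hu : 0 < u) (hζ : 0 < ζ) :
    HasDerivAt (zPlus u v)
      ((u + zPlus u v ζ) ^ 2 / (u * v + 2 * u * zPlus u v ζ + zPlus u v ζ ^ 2)) ζ := by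
  have hD : 0 < (ζ - v) ^ 2 + 4 * u * ζ := by positivity
  have hdiscr : HasDerivAt (fun s => (s - v) ^ 2 + 4 * u * s) (2 * (ζ - v) + 4 * u) ζ := by
    simpa using (((hasDerivAt_id ζ).sub_const v).fun_pow 2).fun_add
      ((hasDerivAt_id ζ).const_mul (4 * u))
  have h := (((hasDerivAt_id ζ).sub_const v).add
    ((hasDerivAt_sqrt hD.ne').comp ζ hdiscr)).div_const 2
  refine h.congr_deriv ?_
  -- the chain rule gives `(u + z₊) / √D`; multiply through by `z₊ + u`
  have hw := sqrt_pos.2 hD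
  have hmul := sqrt_discr_mul_add (v := v) hu.le hζ.le
  have hz := zPlus_pos (v := v) hu hζ
  rw [← hmul, sqrt_discr_eq] at *
  field_simp
  ring

lemma hasDerivAt_phase {z : ℝ} (hzv : z + v ≠ 0) (hzu : z + u ≠ 0) :
    HasDerivAt (phase u v) (v / (z + v) - u / (z + u) - 1) z := by
  have hlog (c : ℝ) (hc : z + c ≠ 0) : HasDerivAt (fun z => log (z + c)) (1 / (z + c)) z :=
    ((hasDerivAt_id z).add_const c).log hc
  exact ((((hasDerivAt_const z ((u - v) * log (u - v))).fun_add ((hlog v hzv).const_mul v)).fun_sub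
    ((hlog u hzu).const_mul u)).fun_sub (hasDerivAt_id' z)).congr_deriv (by ring)

lemma hasDerivAt_phase_zPlus (hu : 0 < u) (hv : 0 < v) (hζ : 0 < ζ) :
    HasDerivAt (fun s => phase u v (zPlus u v s))
      (-(u + zPlus u v ζ) / (v + zPlus u v ζ)) ζ := by
  have hz := zPlus_pos (v := v) hu hζ
  refine ((hasDerivAt_phase (by positivity) (by positivity)).comp ζ
    (hasDerivAt_zPlus hu hζ)).congr_deriv ?_
  have := quadratic_zPlus_pos (v := v) hu hζ
  field_simp
  ring

lemma hasDerivAt_deriv_phase_zPlus (hu : 0 < u) (hv : 0 < v) (hζ : 0 < ζ) :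
    HasDerivAt (deriv fun s => phase u v (zPlus u v s))
      ((u + zPlus u v ζ) ^ 2 * (u - v)
        / ((v + zPlus u v ζ) ^ 2 * (u * v + 2 * u * zPlus u v ζ + zPlus u v ζ ^ 2))) ζ := by
  have hderiv : (deriv fun s => phase u v (zPlus u v s))
      =ᶠ[nhds ζ] fun s => -(u + zPlus u v s) / (v + zPlus u v s) := by
    filter_upwards [Ioi_mem_nhds hζ] with s hs using (hasDerivAt_phase_zPlus hu hv hs).deriv
  have hz := zPlus_pos (v := v) hu hζ
  have hz' := hasDerivAt_zPlus (v := v) hu hζ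
  refine ((hz'.const_add u).fun_neg.div (hz'.const_add v) (by positivity)).congr_deriv ?_
    |>.congr_of_eventuallyEq hderiv
  have := quadratic_zPlus_pos (v := v) hu hζ
  field_simp
  ring

end KummerPhase

open KummerPhase

theorem stmt_14 (u v : ℝ) (huv : u > v) (hv : v > 0)
    (zp φz : ℝ → ℝ)
    (hzp : ∀ s, zp s = (s - v + Real.sqrt ((s - v) ^ 2 + 4 * u * s)) / 2)
    (hφz : ∀ z, φz z = (u - v) * Real.log (u - v) + v * Real.log (z + v)
        - u * Real.log (z + u) - z) :
    (∀ ζ > (0 : ℝ),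
      deriv (deriv (fun s => φz (zp s))) ζ
        = (u + zp ζ) ^ 2 * (u - v)
            / ((v + zp ζ) ^ 2 * (u * v + 2 * u * zp ζ + (zp ζ) ^ 2)) ∧
      deriv (deriv (fun s => φz (zp s))) ζ > 0) ∧
    StrictConvexOn ℝ (Set.Ioi 0) (fun ζ => φz (zp ζ)) := by
  have hu : 0 < u := hv.trans huv
  obtain rfl : zp = zPlus u v := funext hzp
  obtain rfl : φz = phase u v := funext hφz
  have hpos : ∀ ζ > (0 : ℝ), 0 < (u + zPlus u v ζ) ^ 2 * (u - v)
      / ((v + zPlus u v ζ) ^ 2 * (u * v + 2 * u * zPlus u v ζ + zPlus u v ζ ^ 2)) := by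
    intro ζ hζ
    have hz := zPlus_pos (v := v) hu hζ
    have := quadratic_zPlus_pos (v := v) hu hζ
    have := sub_pos.2 huv
    positivity
  have hsecond (ζ : ℝ) (hζ : 0 < ζ) := (hasDerivAt_deriv_phase_zPlus hu hv hζ).deriv
  refine ⟨fun ζ hζ => ⟨hsecond ζ hζ, (hsecond ζ hζ).symm ▸ hpos ζ hζ⟩, ?_⟩
  refine strictConvexOn_of_deriv2_pos' (convex_Ioi 0)
    (fun ζ hζ => (hasDerivAt_phase_zPlus hu hv hζ).continuousAt.continuousWithinAt) ?_
  intro ζ hζ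
  rw [Function.iterate_succ_apply, Function.iterate_one, hsecond ζ hζ]
  exact hpos ζ hζ
end

section
/- Let $c_1,c_2\in(0,1)$, $r=\sqrt{c_1+c_2-c_1c_2}$, $\bar h=(c_2+r)/(1-c_2)$, and define $\Pi_0(h)=-\frac{c_1}{c_2(h+1)}-1+\frac{r(r+c_2)^2}{c_2 h(1-c_2)(r+1)}$ for $h>0$. For every $h>\bar h$, $\Pi_0(h)<\max\{0,\Pi_0(\bar h)\}=0$; i.e. $\Pi_0(h)<0$ for all $h>\bar h$. -/
theorem stmt_17 (c1 c2 : ℝ) (hc1 : 0 < c1) (hc1' : c1 < 1)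
    (hc2 : 0 < c2) (hc2' : c2 < 1)
    (r hbar : ℝ) (hr : r = Real.sqrt (c1 + c2 - c1 * c2))
    (hh : hbar = (c2 + r) / (1 - c2))
    (Pi0 : ℝ → ℝ)
    (hPi : ∀ h, Pi0 h = -(c1 / (c2 * (h + 1))) - 1
        + r * (r + c2) ^ 2 / (c2 * h * (1 - c2) * (r + 1))) :
    max 0 (Pi0 hbar) = 0 ∧ ∀ h > hbar, Pi0 h < 0 := by
  have hs : 0 < c1 + c2 - c1 * c2 := by nlinarith
  have hr2 : r ^ 2 = c1 + c2 - c1 * c2 := by rw [hr]; exact Real.sq_sqrt hs.le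
  have hrpos : 0 < r := by rw [hr]; exact Real.sqrt_pos.mpr hs
  have h1c2 : 0 < 1 - c2 := by linarith
  have hbarpos : 0 < hbar := by rw [hh]; positivity
  have hnum : -(c1 * (1 - c2)) - c2 * (1 + r) + r * (r + c2) = 0 := by
    linear_combination hr2
  have hzero : Pi0 hbar = 0 := by
    have heq : Pi0 hbar = (-(c1 * (1 - c2)) - c2 * (1 + r) + r * (r + c2)) / (c2 * (1 + r)) := by
      rw [hPi, hh]
      have h1 : (1 - c2) ≠ 0 := ne_of_gt h1c2
      have h2 : c2 ≠ 0 := ne_of_gt hc2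
      have h3 : (c2 + r) / (1 - c2) + 1 ≠ 0 := by
        rw [hh] at hbarpos; positivity
      have h4 : (c2 + r) / (1 - c2) ≠ 0 := by positivity
      have h5 : r + 1 ≠ 0 := by positivity
      field_simp
      ring
    rw [heq, hnum, zero_div]
  refine ⟨by simp [hzero], ?_⟩
  intro h hgt
  have hhpos : 0 < h := hbarpos.trans hgt
  have h1 : (1 - c2) ≠ 0 := ne_of_gt h1c2
  have h2 : c2 ≠ 0 := ne_of_gt hc2
  have h5 : r + 1 ≠ 0 := by positivity
  have h6 : h ≠ 0 := ne_of_gt hhpos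
  have h7 : h + 1 ≠ 0 := by positivity
  have hbne : hbar ≠ 0 := ne_of_gt hbarpos
  have hb1 : hbar + 1 ≠ 0 := by positivity
  -- N x := numerator of Pi0 x over common denominator D x
  have hNb : -(c1 * (c2 * hbar * (1 - c2) * (r + 1)))
      - c2 * hbar * (1 - c2) * (r + 1) * (c2 * (hbar + 1))
      + r * (r + c2) ^ 2 * (c2 * (hbar + 1)) = 0 := by
    have : -(c1 * (c2 * hbar * (1 - c2) * (r + 1)))
        - c2 * hbar * (1 - c2) * (r + 1) * (c2 * (hbar + 1))
        + r * (r + c2) ^ 2 * (c2 * (hbar + 1))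
        = Pi0 hbar * (c2 * hbar * (1 - c2) * (r + 1) * (c2 * (hbar + 1))) := by
      rw [hPi]
      field_simp
    rw [this, hzero, zero_mul]
  have hD : (0:ℝ) < c2 * h * (1 - c2) * (r + 1) * (c2 * (h + 1)) := by positivity
  have heq : Pi0 h = (-(c1 * (c2 * h * (1 - c2) * (r + 1)))
      - c2 * h * (1 - c2) * (r + 1) * (c2 * (h + 1))
      + r * (r + c2) ^ 2 * (c2 * (h + 1)))
      / (c2 * h * (1 - c2) * (r + 1) * (c2 * (h + 1))) := by
    rw [hPi]
    field_simp
  rw [heq]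
  apply div_neg_of_neg_of_pos _ hD
  have hid : hbar * (-(c1 * (c2 * h * (1 - c2) * (r + 1)))
      - c2 * h * (1 - c2) * (r + 1) * (c2 * (h + 1))
      + r * (r + c2) ^ 2 * (c2 * (h + 1)))
      = (h - hbar) * (-(c2 ^ 2 * (1 - c2) * (r + 1)) * hbar * h - r * (r + c2) ^ 2 * c2) := by
    linear_combination h * hNb
  have hneg : (h - hbar) * (-(c2 ^ 2 * (1 - c2) * (r + 1)) * hbar * h - r * (r + c2) ^ 2 * c2) < 0 := by
    apply mul_neg_of_pos_of_neg (by linarith)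
    have p1 : 0 < c2 ^ 2 * (1 - c2) * (r + 1) * hbar * h := by positivity
    have p2 : 0 < r * (r + c2) ^ 2 * c2 := by positivity
    nlinarith [p1, p2]
  have hlt : hbar * (-(c1 * (c2 * h * (1 - c2) * (r + 1)))
      - c2 * h * (1 - c2) * (r + 1) * (c2 * (h + 1))
      + r * (r + c2) ^ 2 * (c2 * (h + 1))) < 0 := hid ▸ hneg
  by_contra hcon
  push_neg at hcon
  exact absurd hlt (not_lt.mpr (mul_nonneg hbarpos.le hcon))
end
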